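/- arXiv:1604.01874 — 3 statements merged into one kernel-verified Lean document; each statement's English description precedes it below -/
import Mathlib

section
/- Let λ_1 ≥ λ_2 ≥ ... ≥ λ_p ≥ 0 be real numbers with λ_1 > 0 and λ_l = 0 for all l > 1. Suppose (λ̂_n,i) are sequences with λ̂_n,1² = λ_1² + O(n^{-1/2}) and λ̂_n,l² = O(n^{-1}) for l ≥ 2, and let c_n = log(n)/n. Then (λ̂_n,2² + c_n)/(λ̂_n,1² + c_n) → 0 and (λ̂_n,l+1² + c_n)/(λ̂_n,l² + c_n) → 1 for each l ≥ 2, as n → ∞. Consequently, for all sufficiently large n, the index i minimizing (λ̂_n,i+1² + c_n)/(λ̂_n,i² + c_n) over 1 ≤ i ≤ p−1 equals 1. -/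
open Filter Asymptotics Topology

/-!
With the ridge `c n = log n / n`, every `O(1/n)` squared estimate is `o(c n)`, so for `l ≥ 2` the
ratio `(λ̂_{l+1}² + c)/(λ̂_l² + c) = (λ̂_{l+1}²/c + 1)/(λ̂_l²/c + 1)` tends to `1`; meanwhile
`c n → 0` and `λ̂_1² → λ_1² > 0`, so the first ratio tends to `0`. As only finitely many ratios
are involved, eventually the first one is strictly below all the others.
-/

lemma eventually_log_div_natCast_pos : ∀ᶠ n : ℕ in atTop, 0 < Real.log n / n := by
  filter_upwards [eventually_ge_atTop 2] with n hn
  have h2n : (2 : ℝ) ≤ n := by exact_mod_cast hn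
  exact div_pos (Real.log_pos (by linarith)) (by linarith)

lemma tendsto_log_div_natCast_atTop_nhds_zero :
    Tendsto (fun n : ℕ => Real.log n / n) atTop (𝓝 0) :=
  Real.isLittleO_log_id_atTop.tendsto_div_nhds_zero.comp tendsto_natCast_atTop_atTop

lemma isLittleO_inv_natCast_log_div_natCast :
    (fun n : ℕ => (n : ℝ)⁻¹) =o[atTop] fun n : ℕ => Real.log n / n := by
  have hlog : (fun _ : ℕ => (1 : ℝ)) =o[atTop] fun n : ℕ => Real.log n :=
    (isLittleO_one_left_iff ℝ).2 <|
      tendsto_norm_atTop_atTop.comp (Real.tendsto_log_atTop.comp tendsto_natCast_atTop_atTop)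
  simpa only [one_mul, div_eq_mul_inv] using
    hlog.mul_isBigO (isBigO_refl (fun n : ℕ => (n : ℝ)⁻¹) atTop)

lemma tendsto_add_div_add_of_tendsto_div_nhds_zero {α 𝕜 : Type*} [NormedField 𝕜]
    {l : Filter α} {a b c : α → 𝕜} (ha : Tendsto (fun x => a x / c x) l (𝓝 0))
    (hb : Tendsto (fun x => b x / c x) l (𝓝 0)) (hc : ∀ᶠ x in l, c x ≠ 0) :
    Tendsto (fun x => (b x + c x) / (a x + c x)) l (𝓝 1) := by
  have hlim : Tendsto (fun x => (b x / c x + 1) / (a x / c x + 1)) l (𝓝 1) := by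
    simpa [Pi.div_def] using (hb.add_const 1).div (ha.add_const 1) (by simp)
  refine hlim.congr' ?_
  filter_upwards [hc] with x hx
  rw [div_add_one hx, div_add_one hx, div_div_div_cancel_right₀ hx]

theorem stmt_0_general (p : ℕ) (hp : 2 ≤ p) (lam : ℕ → ℝ) (hat : ℕ → ℕ → ℝ)
    (hlam1 : 0 < lam 1)
    (h1 : (fun n => hat n 1 ^ 2 - lam 1 ^ 2) =O[atTop] fun n : ℕ => (n : ℝ) ^ (-(1/2 : ℝ)))
    (h2 : ∀ l, 2 ≤ l → l ≤ p → (fun n => hat n l ^ 2) =O[atTop] fun n : ℕ => (n : ℝ)⁻¹)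
    (c : ℕ → ℝ) (hc : ∀ n, c n = Real.log n / n) :
    Tendsto (fun n => (hat n 2 ^ 2 + c n) / (hat n 1 ^ 2 + c n)) atTop (nhds 0) ∧
    (∀ l, 2 ≤ l → l + 1 ≤ p →
      Tendsto (fun n => (hat n (l + 1) ^ 2 + c n) / (hat n l ^ 2 + c n)) atTop (nhds 1)) ∧
    (∀ᶠ n in atTop, ∀ i, 2 ≤ i → i + 1 ≤ p →
      (hat n 2 ^ 2 + c n) / (hat n 1 ^ 2 + c n)
        < (hat n (i + 1) ^ 2 + c n) / (hat n i ^ 2 + c n)) := by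
  obtain rfl : c = fun n : ℕ => Real.log n / n := funext hc
  have hhat1 : Tendsto (fun n => hat n 1 ^ 2) atTop (𝓝 (lam 1 ^ 2)) :=
    tendsto_sub_nhds_zero_iff.1 <| h1.trans_tendsto <|
      (tendsto_rpow_neg_atTop (by norm_num)).comp tendsto_natCast_atTop_atTop
  have hhat2 : Tendsto (fun n => hat n 2 ^ 2) atTop (𝓝 0) :=
    (h2 2 le_rfl hp).trans_tendsto tendsto_inv_atTop_nhds_zero_nat
  have first : Tendsto (fun n => (hat n 2 ^ 2 + Real.log n / n) / (hat n 1 ^ 2 + Real.log n / n))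
      atTop (𝓝 0) := by
    simpa [Pi.div_def] using (hhat2.add tendsto_log_div_natCast_atTop_nhds_zero).div
      (hhat1.add tendsto_log_div_natCast_atTop_nhds_zero) (by simpa using (pow_pos hlam1 2).ne')
  have hsmall : ∀ l, 2 ≤ l → l ≤ p →
      Tendsto (fun n => hat n l ^ 2 / (Real.log n / n)) atTop (𝓝 0) := fun l hl hlp =>
    ((h2 l hl hlp).trans_isLittleO isLittleO_inv_natCast_log_div_natCast).tendsto_div_nhds_zero
  have later : ∀ l, 2 ≤ l → l + 1 ≤ p → Tendsto
      (fun n => (hat n (l + 1) ^ 2 + Real.log n / n) / (hat n l ^ 2 + Real.log n / n))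
      atTop (𝓝 1) := fun l hl hlp =>
    tendsto_add_div_add_of_tendsto_div_nhds_zero (hsmall l hl (by omega))
      (hsmall (l + 1) (by omega) hlp) (eventually_log_div_natCast_pos.mono fun _ h => h.ne')
  refine ⟨first, later, ?_⟩
  have hlt : ∀ᶠ n in atTop, ∀ i ∈ Finset.Icc 2 (p - 1),
      (hat n 2 ^ 2 + Real.log n / n) / (hat n 1 ^ 2 + Real.log n / n)
        < (hat n (i + 1) ^ 2 + Real.log n / n) / (hat n i ^ 2 + Real.log n / n) :=
    (eventually_all_finset _).2 fun i hi =>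
      first.eventually_lt (later i (Finset.mem_Icc.1 hi).1 (by grind)) zero_lt_one
  filter_upwards [hlt] with n hn i hi hip
  exact hn i (Finset.mem_Icc.2 ⟨hi, by omega⟩)

/-- Deterministic consistency of the MRER estimator under the null:
if the first eigenvalue estimate converges to a positive limit at rate `n^{-1/2}`
and the remaining squared eigenvalue estimates are `O(1/n)`, then with the ridge
`c n = log n / n`, the first eigenvalue ratio tends to `0`, the later ones tend to
`1`, and eventually the minimizing index is `1`. -/
theorem stmt_0 (p : ℕ) (hp : 2 ≤ p) (lam : ℕ → ℝ) (hat : ℕ → ℕ → ℝ)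
    (hmono : ∀ i j, 1 ≤ i → i ≤ j → j ≤ p → lam j ≤ lam i)
    (hnonneg : ∀ i, 1 ≤ i → i ≤ p → 0 ≤ lam i)
    (hlam1 : 0 < lam 1) (hlam0 : ∀ l, 2 ≤ l → l ≤ p → lam l = 0)
    (h1 : (fun n => hat n 1 ^ 2 - lam 1 ^ 2) =O[atTop] fun n : ℕ => (n : ℝ) ^ (-(1/2 : ℝ)))
    (h2 : ∀ l, 2 ≤ l → l ≤ p → (fun n => hat n l ^ 2) =O[atTop] fun n : ℕ => (n : ℝ)⁻¹)
    (c : ℕ → ℝ) (hc : ∀ n, c n = Real.log n / n) :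
    Tendsto (fun n => (hat n 2 ^ 2 + c n) / (hat n 1 ^ 2 + c n)) atTop (nhds 0) ∧
    (∀ l, 2 ≤ l → l + 1 ≤ p →
      Tendsto (fun n => (hat n (l + 1) ^ 2 + c n) / (hat n l ^ 2 + c n)) atTop (nhds 1)) ∧
    (∀ᶠ n in atTop, ∀ i, 2 ≤ i → i + 1 ≤ p →
      (hat n 2 ^ 2 + c n) / (hat n 1 ^ 2 + c n)
        < (hat n (i + 1) ^ 2 + c n) / (hat n i ^ 2 + c n)) :=
  stmt_0_general p hp lam hat hlam1 h1 h2 c hc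
end

section
/- Let X be a spherically distributed random vector in ℝ^p with E‖X‖ < ∞, β_0 ∈ ℝ^p nonzero, κ = 1/‖β_0‖, and g' : ℝ → ℝ measurable with g'(β_0ᵀX)·‖X‖ integrable. Then for every u ∈ ℝ, E[g'(β_0ᵀX) X · 1{κ β_0ᵀX ≤ u}] = (β_0/‖β_0‖²) · E[g'(β_0ᵀX) (β_0ᵀX) · 1{κ β_0ᵀX ≤ u}]. -/
/-!
Write `eᵢ = (β₀ᵢ / ‖β₀‖²) β₀ + w` with `w ⊥ β₀`. The Householder reflection in `w` is orthogonal,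
fixes `β₀ᵀx` and negates `wᵀx`, so spherical symmetry of `X` forces `E[G(β₀ᵀX) wᵀX] = 0` for every
measurable `G`. Linearity of the integral, with `G(t) = g'(t) 1{κt ≤ u}`, gives the identity.
-/

open MeasureTheory Matrix

section Householder

variable {K : Type*} [Field K] {n : Type*} [Fintype n] [DecidableEq n]

-- `householder 0 = 1`, since `2 / 0 = 0`.
noncomputable def householder (w : n → K) : Matrix n n K :=
  1 - (2 / (w ⬝ᵥ w)) • vecMulVec w w

theorem householder_mulVec (w x : n → K) :
    householder w *ᵥ x = x - (2 / (w ⬝ᵥ w) * (w ⬝ᵥ x)) • w := by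
  simp [householder, sub_mulVec, smul_mulVec, vecMulVec_mulVec, smul_smul]

theorem transpose_householder (w : n → K) : (householder w)ᵀ = householder w := by
  simp [householder, transpose_vecMulVec]

theorem householder_transpose_mul_self (w : n → K) :
    (householder w)ᵀ * householder w = 1 := by
  have hcoef : (2 / (w ⬝ᵥ w)) * (2 / (w ⬝ᵥ w)) * (w ⬝ᵥ w) = 2 * (2 / (w ⬝ᵥ w)) := by
    rcases eq_or_ne (w ⬝ᵥ w) 0 with h | h
    · simp [h]
    · field_simp
  rw [transpose_householder, householder, sub_mul, mul_sub, mul_sub, smul_mul_smul_comm,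
    vecMulVec_mul_vecMulVec, vecMulVec_smul, smul_smul, hcoef]
  simp only [one_mul, mul_one]
  module

theorem dotProduct_householder_mulVec_of_dotProduct_eq_zero {v w : n → K} (hvw : v ⬝ᵥ w = 0)
    (x : n → K) : v ⬝ᵥ (householder w *ᵥ x) = v ⬝ᵥ x := by
  simp [householder_mulVec, dotProduct_sub, hvw]

theorem dotProduct_householder_mulVec_self [LinearOrder K] [IsStrictOrderedRing K]
    (w x : n → K) :
    w ⬝ᵥ (householder w *ᵥ x) = -(w ⬝ᵥ x) := by
  rcases eq_or_ne w 0 with rfl | hw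
  · simp
  have : w ⬝ᵥ w ≠ 0 := fun h => hw (dotProduct_self_eq_zero.mp h)
  rw [householder_mulVec, dotProduct_sub, dotProduct_smul, smul_eq_mul]
  field_simp
  ring

end Householder

section Spherical

variable {Ω : Type*} [MeasurableSpace Ω] {μ : Measure Ω}

theorem integral_eq_zero_of_map_eq_of_odd {E : Type*} [MeasurableSpace E] {X : Ω → E}
    {T : E → E} {F : E → ℝ} (hX : Measurable X) (hT : Measurable T) (hF : Measurable F)
    (hmap : μ.map (fun ω => T (X ω)) = μ.map X) (hodd : ∀ x, F (T x) = -F x) :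
    ∫ ω, F (X ω) ∂μ = 0 := by
  have hinv : ∫ ω, F (X ω) ∂μ = ∫ ω, F (T (X ω)) ∂μ := by
    rw [← integral_map hX.aemeasurable hF.aestronglyMeasurable, ← hmap,
      integral_map (φ := fun ω => T (X ω)) (hT.comp hX).aemeasurable hF.aestronglyMeasurable]
  simp only [hodd, integral_neg] at hinv
  linarith

variable {n : Type*} [Fintype n]

def IsSphericallySymmetric [DecidableEq n] (μ : Measure Ω) (X : Ω → n → ℝ) : Prop :=
  ∀ O : Matrix n n ℝ, Oᵀ * O = 1 → μ.map (fun ω => O *ᵥ X ω) = μ.map X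

theorem IsSphericallySymmetric.integral_mul_dotProduct_eq_zero [DecidableEq n] {X : Ω → n → ℝ}
    (hsph : IsSphericallySymmetric μ X) (hX : Measurable X) {G : ℝ → ℝ} (hG : Measurable G)
    {β w : n → ℝ} (hβw : β ⬝ᵥ w = 0) :
    ∫ ω, G (β ⬝ᵥ X ω) * (w ⬝ᵥ X ω) ∂μ = 0 := by
  refine integral_eq_zero_of_map_eq_of_odd (F := fun x => G (β ⬝ᵥ x) * (w ⬝ᵥ x)) hX
    (by fun_prop : Measurable fun x => householder w *ᵥ x) ?_
    (hsph _ (householder_transpose_mul_self w)) fun x => ?_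
  · fun_prop
  · simp only [dotProduct_householder_mulVec_of_dotProduct_eq_zero hβw,
      dotProduct_householder_mulVec_self, mul_neg]

theorem abs_dotProduct_le_sqrt_mul_sqrt (v x : n → ℝ) :
    |v ⬝ᵥ x| ≤ √(∑ i, v i ^ 2) * √(∑ i, x i ^ 2) := by
  rw [← Real.sqrt_mul (Finset.sum_nonneg fun i _ => sq_nonneg (v i))]
  exact Real.abs_le_sqrt (Finset.sum_mul_sq_le_sq_mul_sq _ _ _)

theorem integrable_mul_dotProduct_of_abs_le {X : Ω → n → ℝ} {f h : Ω → ℝ}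
    (hX : Measurable X) (hf : AEStronglyMeasurable f μ) (hfh : ∀ ω, |f ω| ≤ |h ω|)
    (hint : Integrable (fun ω => |h ω| * √(∑ i, X ω i ^ 2)) μ) (v : n → ℝ) :
    Integrable (fun ω => f ω * (v ⬝ᵥ X ω)) μ := by
  refine (hint.const_mul √(∑ i, v i ^ 2)).mono
    (hf.mul (by fun_prop : Measurable fun ω => v ⬝ᵥ X ω).aestronglyMeasurable) ?_
  refine .of_forall fun ω => ?_
  simp only [norm_mul, Real.norm_eq_abs, abs_abs, abs_of_nonneg (Real.sqrt_nonneg _)]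
  calc |f ω| * |v ⬝ᵥ X ω| ≤ |h ω| * (√(∑ i, v i ^ 2) * √(∑ i, X ω i ^ 2)) :=
        mul_le_mul (hfh ω) (abs_dotProduct_le_sqrt_mul_sqrt v (X ω)) (abs_nonneg _)
          (abs_nonneg _)
    _ = √(∑ i, v i ^ 2) * (|h ω| * √(∑ i, X ω i ^ 2)) := by ring

theorem dotProduct_sub_proj_eq_zero (β v : n → ℝ) :
    β ⬝ᵥ (v - (β ⬝ᵥ v / (β ⬝ᵥ β)) • β) = 0 := by
  rcases eq_or_ne β 0 with rfl | hβ
  · simp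
  have : β ⬝ᵥ β ≠ 0 := fun h => hβ (dotProduct_self_eq_zero.mp h)
  rw [dotProduct_sub, dotProduct_smul, smul_eq_mul, div_mul_cancel₀ _ this, sub_self]

theorem IsSphericallySymmetric.integral_mul_dotProduct [DecidableEq n] {X : Ω → n → ℝ}
    (hsph : IsSphericallySymmetric μ X) (hX : Measurable X) {G : ℝ → ℝ} (hG : Measurable G)
    {β : n → ℝ} (hint : ∀ v, Integrable (fun ω => G (β ⬝ᵥ X ω) * (v ⬝ᵥ X ω)) μ) (v : n → ℝ) :
    ∫ ω, G (β ⬝ᵥ X ω) * (v ⬝ᵥ X ω) ∂μ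
      = β ⬝ᵥ v / (β ⬝ᵥ β) * ∫ ω, G (β ⬝ᵥ X ω) * (β ⬝ᵥ X ω) ∂μ := by
  set c := β ⬝ᵥ v / (β ⬝ᵥ β)
  have hsplit : ∀ ω, G (β ⬝ᵥ X ω) * (v ⬝ᵥ X ω)
      = G (β ⬝ᵥ X ω) * ((v - c • β) ⬝ᵥ X ω) + c * (G (β ⬝ᵥ X ω) * (β ⬝ᵥ X ω)) := by
    intro ω
    rw [sub_dotProduct, smul_dotProduct, smul_eq_mul]
    ring
  simp_rw [hsplit]
  rw [integral_add (hint _) ((hint β).const_mul c), integral_const_mul,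
    hsph.integral_mul_dotProduct_eq_zero hX hG (dotProduct_sub_proj_eq_zero β v), zero_add]

end Spherical

theorem stmt_9_general {Ω : Type*} [m0 : MeasurableSpace Ω] (μ : Measure Ω)
    (p : ℕ) (X : Ω → (Fin p → ℝ)) (β0 : Fin p → ℝ)
    (g' : ℝ → ℝ) (hg' : Measurable g') (hX : Measurable X)
    (hint : Integrable (fun ω => |g' (∑ k, β0 k * X ω k)| * Real.sqrt (∑ i, X ω i ^ 2)) μ)
    (hsph : ∀ O : Matrix (Fin p) (Fin p) ℝ, O.transpose * O = 1 →
      Measure.map (fun ω => O.mulVec (X ω)) μ = Measure.map X μ) :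
    ∀ u : ℝ, ∀ i : Fin p,
      ∫ ω, g' (∑ k, β0 k * X ω k) * X ω i
          * (if (Real.sqrt (∑ k, β0 k ^ 2))⁻¹ * ∑ k, β0 k * X ω k ≤ u then (1 : ℝ) else 0) ∂μ
        = β0 i / (∑ k, β0 k ^ 2)
          * ∫ ω, g' (∑ k, β0 k * X ω k) * (∑ k, β0 k * X ω k)
              * (if (Real.sqrt (∑ k, β0 k ^ 2))⁻¹ * ∑ k, β0 k * X ω k ≤ u then (1 : ℝ) else 0) ∂μ := by
  intro u i
  have hnorm : β0 ⬝ᵥ β0 = ∑ k, β0 k ^ 2 := by simp only [dotProduct, sq]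
  set G : ℝ → ℝ := fun t => g' t * (if (√(β0 ⬝ᵥ β0))⁻¹ * t ≤ u then 1 else 0)
  have hG : Measurable G :=
    hg'.mul (Measurable.ite (measurableSet_le (by fun_prop) measurable_const) measurable_const
      measurable_const)
  have hGg' (t : ℝ) : |G t| ≤ |g' t| := by
    simp only [G, abs_mul]
    split_ifs <;> simp
  have key := IsSphericallySymmetric.integral_mul_dotProduct hsph hX hG
    (fun v => integrable_mul_dotProduct_of_abs_le hX (hG.comp (by fun_prop)).aestronglyMeasurable
      (fun ω => hGg' _) hint v) (Pi.single i 1)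
  simp only [G, single_dotProduct, dotProduct_single, one_mul, mul_one, hnorm,
    mul_right_comm (g' _)] at key
  exact key

/-- For a spherically distributed `X`, the vector `M(u) = E[g'(β₀ᵀX) X · 1{κβ₀ᵀX ≤ u}]`
collapses to `(β₀/‖β₀‖²) E[g'(β₀ᵀX)(β₀ᵀX) · 1{κβ₀ᵀX ≤ u}]`, where `κ = 1/‖β₀‖`. -/
theorem stmt_9 {Ω : Type*} [m0 : MeasurableSpace Ω] (μ : Measure Ω) [IsProbabilityMeasure μ]
    (p : ℕ) (X : Ω → (Fin p → ℝ)) (β0 : Fin p → ℝ) (hβ : β0 ≠ 0)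
    (g' : ℝ → ℝ) (hg' : Measurable g') (hX : Measurable X)
    (hint : Integrable (fun ω => |g' (∑ k, β0 k * X ω k)| * Real.sqrt (∑ i, X ω i ^ 2)) μ)
    (hsph : ∀ O : Matrix (Fin p) (Fin p) ℝ, O.transpose * O = 1 →
      Measure.map (fun ω => O.mulVec (X ω)) μ = Measure.map X μ) :
    ∀ u : ℝ, ∀ i : Fin p,
      ∫ ω, g' (∑ k, β0 k * X ω k) * X ω i
          * (if (Real.sqrt (∑ k, β0 k ^ 2))⁻¹ * ∑ k, β0 k * X ω k ≤ u then (1 : ℝ) else 0) ∂μ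
        = β0 i / (∑ k, β0 k ^ 2)
          * ∫ ω, g' (∑ k, β0 k * X ω k) * (∑ k, β0 k * X ω k)
              * (if (Real.sqrt (∑ k, β0 k ^ 2))⁻¹ * ∑ k, β0 k * X ω k ≤ u then (1 : ℝ) else 0) ∂μ :=
  stmt_9_general (m0 := m0) μ p X β0 g' hg' hX hint hsph
end

section
/- Let (Ω, F, μ) be a probability space, f : ℝ → ℝ of bounded variation with f(−∞) = 0, and suppose the ℝ^k-valued functions a and the matrix-valued function A satisfy A(u) = ∫_{[u,∞)} a(v) a(v)ᵀ dψ(v) with A(u) invertible for u ≤ z, where ψ is a finite measure on ℝ. Define (Tf)(z) = f(z) − ∫_{(-∞,z]} a(u)ᵀ A(u)^{-1} (∫_{[u,∞)} a(v) df(v)) dψ(u). If f(z) = ∫_{(-∞,z]} a(v)ᵀ c dψ(v) for a fixed vector c ∈ ℝ^k (i.e. f = Mᵀc with dM = a dψ), then (Tf)(z) = 0 for all z. -/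
open MeasureTheory

/-- The innovation (Khmaladze-type) transformation annihilates drifts of the form
`f(z) = ∫_{(-∞,z]} a(v)ᵀc dψ(v)`: with `A(u) = ∫_{[u,∞)} a(v)a(v)ᵀ dψ(v)` invertible,
`(Tf)(z) = f(z) − ∫_{(-∞,z]} a(u)ᵀ A(u)⁻¹ (∫_{[u,∞)} a(v) df(v)) dψ(u) = 0` for all `z`. -/
theorem stmt_15 (k : ℕ) (ψ : Measure ℝ) [IsFiniteMeasure ψ]
    (a : ℝ → (Fin k → ℝ)) (A : ℝ → Matrix (Fin k) (Fin k) ℝ) (c : Fin k → ℝ) (f : ℝ → ℝ)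
    (hameas : Measurable a)
    (hint : ∀ i j, Integrable (fun v => a v i * a v j) ψ)
    (hA : ∀ u, ∀ i j, A u i j = ∫ v in Set.Ici u, a v i * a v j ∂ψ)
    (hAinv : ∀ u, IsUnit (A u))
    (hf : ∀ z, f z = ∫ v in Set.Iic z, (∑ i, a v i * c i) ∂ψ) :
    ∀ z : ℝ,
      f z - ∫ u in Set.Iic z,
          (∑ i, a u i *
            ((A u)⁻¹.mulVec (fun j => ∫ v in Set.Ici u, a v j * (∑ i', a v i' * c i') ∂ψ)) i)
        ∂ψ = 0 := by
  intro z
  have key : ∀ u, (fun j => ∫ v in Set.Ici u, a v j * (∑ i', a v i' * c i') ∂ψ)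
      = (A u).mulVec c := by
    intro u
    funext j
    have h1 : ∀ v, a v j * (∑ i', a v i' * c i') = ∑ i', a v j * a v i' * c i' := by
      intro v
      rw [Finset.mul_sum]
      exact Finset.sum_congr rfl fun i _ => by ring
    simp only [h1]
    rw [integral_finset_sum]
    · simp only [Matrix.mulVec, dotProduct, hA]
      refine Finset.sum_congr rfl fun i _ => ?_
      rw [← integral_mul_const]
    · intro i _
      exact ((hint j i).restrict.mul_const _)
  have hinv : ∀ u, (A u)⁻¹.mulVec ((A u).mulVec c) = c := by
    intro u
    rw [Matrix.mulVec_mulVec, Matrix.nonsing_inv_mul _ ((Matrix.isUnit_iff_isUnit_det _).mp (hAinv u)), Matrix.one_mulVec]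
  have : ∀ u, (∑ i, a u i *
      ((A u)⁻¹.mulVec (fun j => ∫ v in Set.Ici u, a v j * (∑ i', a v i' * c i') ∂ψ)) i)
      = ∑ i, a u i * c i := by
    intro u
    rw [key u, hinv u]
  simp only [this]
  rw [hf z, sub_self]
end
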